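/- arXiv:1612.03922 — 4 statements merged into one kernel-verified Lean document; each statement's English description precedes it below -/
import Mathlib

section
/- For any rim-hook h of a partition λ corresponding to the cell (i,j), the set of contents {c(u) : u ∈ h} equals the integer interval {j - λ'_j, j - λ'_j + 1, …, λ_i - i}. -/
abbrev Cell := ℕ × ℕ

def nC (u : Cell) : Cell := (u.1 - 1, u.2)
def eC (u : Cell) : Cell := (u.1, u.2 + 1)
def sC (u : Cell) : Cell := (u.1 + 1, u.2)
def wC (u : Cell) : Cell := (u.1, u.2 - 1)
def seC (u : Cell) : Cell := (u.1 + 1, u.2 + 1)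

/-- `lam i` is the `i`-th part (1-indexed); weakly decreasing with finitely many nonzero parts. -/
def IsPartition (lam : ℕ → ℕ) : Prop :=
  (∀ i, lam (i + 1) ≤ lam i) ∧ (∃ N, ∀ i, N ≤ i → lam i = 0)

/-- The Young diagram of `lam`: cells `(i,j)` with `1 ≤ i`, `1 ≤ j ≤ lam i`. -/
def cells (lam : ℕ → ℕ) : Set Cell := {u | 1 ≤ u.1 ∧ 1 ≤ u.2 ∧ u.2 ≤ lam u.1}

/-- The conjugate partition. -/
noncomputable def conj (lam : ℕ → ℕ) (j : ℕ) : ℕ := {i | 1 ≤ i ∧ j ≤ lam i}.ncard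

def content (u : Cell) : ℤ := (u.2 : ℤ) - (u.1 : ℤ)

/-- Hook length of the cell `u = (i,j)`: `lam i + lam' j - i - j + 1`. -/
noncomputable def hookLen (lam : ℕ → ℕ) (u : Cell) : ℕ := lam u.1 + conj lam u.2 - u.1 - u.2 + 1

/-- A North-East path in `lam`. -/
def IsNEPath (lam : ℕ → ℕ) (P : List Cell) : Prop :=
  P ≠ [] ∧ (∀ u ∈ P, u ∈ cells lam) ∧ List.Chain' (fun u v => v = nC u ∨ v = eC u) P

/-- Head of a path. -/
def hd (P : List Cell) : Cell := P.headD (0, 0)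
/-- Tail (last cell) of a path. -/
def lst (P : List Cell) : Cell := P.getLastD (0, 0)
/-- Length of a path (number of steps). -/
def len (P : List Cell) : ℕ := P.length - 1

/-- A rim-hook of `lam`. -/
def IsRimHook (lam : ℕ → ℕ) (h : List Cell) : Prop :=
  IsNEPath lam h ∧ sC (hd h) ∉ cells lam ∧ eC (lst h) ∉ cells lam ∧
    ∀ u ∈ h, seC u ∉ cells lam

def IsOuterCorner (lam : ℕ → ℕ) (u : Cell) : Prop :=
  u ∈ cells lam ∧ eC u ∉ cells lam ∧ sC u ∉ cells lam

def IsInnerCorner (lam : ℕ → ℕ) (u : Cell) : Prop :=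
  u ∈ cells lam ∧ eC u ∈ cells lam ∧ sC u ∈ cells lam ∧ seC u ∉ cells lam

def IsCornerContent (lam : ℕ → ℕ) (z : ℤ) : Prop :=
  ∃ v, (IsInnerCorner lam v ∨ IsOuterCorner lam v) ∧ content v = z

/-- Cells whose content is the content of an inner corner. -/
def regionI (lam : ℕ → ℕ) : Set Cell :=
  {u ∈ cells lam | ∃ v, IsInnerCorner lam v ∧ content v = content u}

/-- Cells whose content is the content of an outer corner. -/
def regionO (lam : ℕ → ℕ) : Set Cell :=
  {u ∈ cells lam | ∃ v, IsOuterCorner lam v ∧ content v = content u}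

/-- Cells with `c(u) < o_1` or `i_k < c(u) < o_{k+1}`: the content is not a corner content
and the largest corner content below it (if any) is an inner-corner content. -/
def regionA (lam : ℕ → ℕ) : Set Cell :=
  {u ∈ cells lam | ¬ IsCornerContent lam (content u) ∧
    ∀ w, IsOuterCorner lam w → content w < content u →
      ∃ v, IsInnerCorner lam v ∧ content w < content v ∧ content v < content u}

/-- Cells with `o_k < c(u) < i_k` or `o_{r+1} < c(u)`: the remaining cells. -/
def regionB (lam : ℕ → ℕ) : Set Cell :=
  cells lam \ (regionI lam ∪ regionO lam ∪ regionA lam)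

/-- A reverse plane partition of shape `lam`, as a function vanishing outside `lam`
which is weakly increasing along rows and columns. -/
def IsRPP (lam : ℕ → ℕ) (π : Cell → ℕ) : Prop :=
  (∀ u, u ∉ cells lam → π u = 0) ∧
  (∀ u ∈ cells lam, eC u ∈ cells lam → π u ≤ π (eC u)) ∧
  (∀ u ∈ cells lam, sC u ∈ cells lam → π u ≤ π (sC u))

/-- `π + P`: increase by one along the path. -/
def addPath (π : Cell → ℕ) (P : List Cell) : Cell → ℕ :=
  fun u => if u ∈ P then π u + 1 else π u

/-- `π - P`: decrease by one along the path. -/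
def subPath (π : Cell → ℕ) (P : List Cell) : Cell → ℕ :=
  fun u => if u ∈ P then π u - 1 else π u

/-- The path `P` is `π`-compatible. -/
def Compatible (lam : ℕ → ℕ) (π : Cell → ℕ) (P : List Cell) : Prop :=
  (∀ u ∈ P, u ∈ regionI lam ∪ regionA lam → eC u ∈ P ∧ π (eC u) = π u) ∧
  (∀ u ∈ P, nC u ∈ P → π (nC u) = π u)

/-- `P` witnesses the insertion of the rim-hook `h` into `π`. -/
def InsertPath (lam : ℕ → ℕ) (π : Cell → ℕ) (h P : List Cell) : Prop :=
  IsNEPath lam P ∧ Compatible lam π P ∧ lst P = lst h ∧ len P = len h ∧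
    IsRPP lam (addPath π P)

/-- The rim-hook `h` inserts into `π`. -/
def Inserts (lam : ℕ → ℕ) (h : List Cell) (π : Cell → ℕ) : Prop :=
  ∃ P, InsertPath lam π h P

open Classical in
/-- `h * π`, the insertion of `h` into `π` (equal to `π` if `h` does not insert). -/
noncomputable def insertRH (lam : ℕ → ℕ) (h : List Cell) (π : Cell → ℕ) : Cell → ℕ :=
  if hP : Inserts lam h π then addPath π hP.choose else π

/-- `h₁ * h₂ * ⋯ * h_s * 0`. -/
noncomputable def insertList (lam : ℕ → ℕ) (hs : List (List Cell)) : Cell → ℕ :=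
  hs.foldr (insertRH lam) (fun _ => 0)

/-- Reverse lexicographic order on rim-hooks. -/
def RHle (f h : List Cell) : Prop :=
  content (hd h) < content (hd f) ∨
    (content (hd f) = content (hd h) ∧ content (lst f) ≤ content (lst h))

/-- Reverse lexicographic order on cells. -/
def revlexLE (u v : Cell) : Prop := v.2 < u.2 ∨ (u.2 = v.2 ∧ v.1 ≤ u.1)

/-- Content order on cells: `u ⊴ v`. -/
def contentLE (u v : Cell) : Prop :=
  content v < content u ∨ (content u = content v ∧ v.1 ≤ u.1)

/-- The set of candidates of `π`. -/
def candidates (lam : ℕ → ℕ) (π : Cell → ℕ) : Set Cell :=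
  {u ∈ regionO lam | π (wC u) < π u} ∪
    {u ∈ regionA lam | π (wC u) < π u ∧ π (nC u) < π u}

/-- One step of the path `Q(π,u)`. -/
def QStep (lam : ℕ → ℕ) (π : Cell → ℕ) (v v' : Cell) : Prop :=
  (v ∈ regionO lam ∪ regionB lam ∧ π (nC v) = π v ∧ v' = nC v) ∨
  ((v ∈ regionI lam ∪ regionA lam ∨ (π (nC v) < π v ∧ eC v ∈ cells lam)) ∧ v' = eC v)

/-- `P` is the path `Q(π,u)`: starts at `u`, follows the `Q`-steps, and terminates
when `π(n v) < π(v)` and `e v ∉ lam`. -/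
def IsQPath (lam : ℕ → ℕ) (π : Cell → ℕ) (u : Cell) (P : List Cell) : Prop :=
  P ≠ [] ∧ (∀ v ∈ P, v ∈ cells lam) ∧ hd P = u ∧ List.Chain' (QStep lam π) P ∧
    π (nC (lst P)) < π (lst P) ∧ eC (lst P) ∉ cells lam

/-! Each step of a North-East path goes one cell north or east and so raises the content by
exactly one; hence the contents along a path, in particular along a rim-hook, sweep out every
integer from the content of its head to that of its tail. -/

theorem Set.setOf_exists_mem_eq_Icc_of_isChain {ι α : Type*} [LinearOrder α] [One α] [Add α]
    [SuccAddOrder α] (f : ι → α) :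
    ∀ {l : List ι} (hl : l ≠ []), l.IsChain (fun a b => f b = f a + 1) →
      {z | ∃ v ∈ l, f v = z} = Set.Icc (f (l.head hl)) (f (l.getLast hl))
  | [a], _, _ => by ext; simp [eq_comm]
  | a :: b :: t, _, hc => by
    rw [List.isChain_cons_cons] at hc
    obtain ⟨hab, hc⟩ := hc
    have ih := setOf_exists_mem_eq_Icc_of_isChain f (List.cons_ne_nil b t) hc
    have hb_le : f b ≤ f ((b :: t).getLast (List.cons_ne_nil b t)) :=
      (ih ▸ show f b ∈ {z | ∃ v ∈ b :: t, f v = z} from ⟨b, List.mem_cons_self, rfl⟩).2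
    have ha_le : f a ≤ f b := hab ▸ Order.succ_eq_add_one (f a) ▸ Order.le_succ (f a)
    calc {z | ∃ v ∈ a :: b :: t, f v = z} = insert (f a) {z | ∃ v ∈ b :: t, f v = z} := by
          ext; simp [or_and_right, exists_or, eq_comm]
      _ = _ := by
        rw [ih, List.head_cons, List.head_cons, List.getLast_cons_cons, hab]
        exact Set.insert_Icc_add_one_left_eq_Icc (ha_le.trans hb_le)

theorem content_eC (u : Cell) : content (eC u) = content u + 1 := by
  simp only [content, eC]; push_cast; ring

theorem content_nC {u : Cell} (hu : 1 ≤ u.1) : content (nC u) = content u + 1 := by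
  simp only [content, nC]; omega

theorem IsNEPath.isChain_content {lam : ℕ → ℕ} {P : List Cell} (hP : IsNEPath lam P) :
    P.IsChain (fun a b => content b = content a + 1) :=
  hP.2.2.imp_of_mem_imp fun a _ ha _ hstep => by
    rcases hstep with rfl | rfl
    · exact content_nC (hP.2.1 a ha).1
    · exact content_eC a

theorem hd_eq_head {P : List Cell} (hP : P ≠ []) : hd P = P.head hP := by
  cases P with
  | nil => contradiction
  | cons a t => rfl

theorem lst_eq_getLast {P : List Cell} (hP : P ≠ []) : lst P = P.getLast hP := by
  simp [lst, List.getLastD_eq_getLast?, List.getLast?_eq_some_getLast hP]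

theorem rimHook_contents_general (lam : ℕ → ℕ)
    (u : Cell) (h : List Cell) (hh : IsRimHook lam h)
    (hhd : hd h = (conj lam u.2, u.2)) (hlst : lst h = (u.1, lam u.1)) :
    {z : ℤ | ∃ v ∈ h, content v = z} =
      Set.Icc ((u.2 : ℤ) - (conj lam u.2 : ℤ)) ((lam u.1 : ℤ) - (u.1 : ℤ)) := by
  have hP : IsNEPath lam h := hh.1
  rw [Set.setOf_exists_mem_eq_Icc_of_isChain content hP.1 hP.isChain_content,
    ← hd_eq_head, ← lst_eq_getLast, hhd, hlst]
  rfl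

/-- The contents of the cells of the rim-hook corresponding to `(i,j)` form the
interval `{j - lam'_j, …, lam_i - i}`. -/
theorem rimHook_contents (lam : ℕ → ℕ) (hlam : IsPartition lam)
    (u : Cell) (hu : u ∈ cells lam) (h : List Cell) (hh : IsRimHook lam h)
    (hhd : hd h = (conj lam u.2, u.2)) (hlst : lst h = (u.1, lam u.1)) :
    {z : ℤ | ∃ v ∈ h, content v = z} =
      Set.Icc ((u.2 : ℤ) - (conj lam u.2 : ℤ)) ((lam u.1 : ℤ) - (u.1 : ℤ)) :=
  rimHook_contents_general lam u h hh hhd hlst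
end

section
/- For any rim-hook h of a partition λ, the head α(h) lies in the region A ∪ O and the tail ω(h) lies in the region O ∪ B, where λ is partitioned into regions I, O, A, B according to the contents of its inner and outer corners. -/
lemma lam_anti (lam : ℕ → ℕ) (hlam : IsPartition lam) {a b : ℕ} (hab : a ≤ b) :
    lam b ≤ lam a := by
  induction b, hab using Nat.le_induction with
  | base => exact le_refl _
  | succ n hn ih => exact le_trans (hlam.1 n) ih

lemma mem_cells_iff (lam : ℕ → ℕ) (u : Cell) :
    u ∈ cells lam ↔ 1 ≤ u.1 ∧ 1 ≤ u.2 ∧ u.2 ≤ lam u.1 := Iff.rfl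

/-- Uniqueness of the cell with `se u ∉ λ` on a diagonal. -/
lemma end_unique (lam : ℕ → ℕ) (hlam : IsPartition lam) {u v : Cell}
    (hu : u ∈ cells lam) (hv : v ∈ cells lam) (hc : content u = content v)
    (hsu : seC u ∉ cells lam) (hsv : seC v ∉ cells lam) : u = v := by
  obtain ⟨hu1, hu2, hu3⟩ := hu
  obtain ⟨hv1, hv2, hv3⟩ := hv
  simp only [content] at hc
  have key : ∀ w z : Cell, 1 ≤ w.2 → z.2 ≤ lam z.1 →
      (w.2 : ℤ) - w.1 = (z.2 : ℤ) - z.1 → seC w ∉ cells lam → z.1 ≤ w.1 := by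
    intro w z hw2 hz3 hcc hsw
    by_contra hlt
    push_neg at hlt
    apply hsw
    refine ⟨by simp [seC], by simp [seC], ?_⟩
    show w.2 + 1 ≤ lam (w.1 + 1)
    have h1 : w.1 + 1 ≤ z.1 := hlt
    have h2 : lam z.1 ≤ lam (w.1 + 1) := lam_anti lam hlam h1
    have h3 : w.2 + (z.1 - w.1) = z.2 := by omega
    omega
  have h1 : u.1 ≤ v.1 := key v u hv2 hu3 hc.symm hsv
  have h2 : v.1 ≤ u.1 := key u v hu2 hv3 hc hsu
  have h3 : u.1 = v.1 := le_antisymm h1 h2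
  have h4 : u.2 = v.2 := by omega
  exact Prod.ext h3 h4

/-- A corner (inner or outer) has `se ∉ λ`. -/
lemma corner_se (lam : ℕ → ℕ) {v : Cell}
    (hv : IsInnerCorner lam v ∨ IsOuterCorner lam v) : seC v ∉ cells lam := by
  rcases hv with ⟨_, _, _, h⟩ | ⟨⟨h1, h2, h3⟩, _, hs⟩
  · exact h
  · intro hmem
    obtain ⟨hm1, hm2, hm3⟩ := hmem
    simp only [seC] at hm1 hm2 hm3
    refine hs ⟨?_, ?_, ?_⟩ <;> simp only [sC] <;> omega

lemma lst_mem : ∀ (P : List Cell), P ≠ [] → lst P ∈ P := by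
  intro P
  induction P with
  | nil => intro hP; exact absurd rfl hP
  | cons a t ih =>
    intro _
    cases t with
    | nil => simp [lst]
    | cons b t' =>
      have he : lst (a :: b :: t') = lst (b :: t') := by
        simp [lst, List.getLastD_cons]
      rw [he]
      exact List.mem_cons_of_mem _ (ih (by simp))

lemma head_in_AO (lam : ℕ → ℕ) (hlam : IsPartition lam) (u : Cell)
    (hu : u ∈ cells lam) (hs : sC u ∉ cells lam) (hse : seC u ∉ cells lam) :
    u ∈ regionA lam ∪ regionO lam := by
  by_cases he : eC u ∈ cells lam
  · left
    obtain ⟨hu1, hu2, hu3⟩ := hu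
    have hsn : lam (u.1 + 1) < u.2 := by
      by_contra hcon
      exact hs ⟨by simp [sC], by simpa [sC] using hu2, by simp [sC]; omega⟩
    have hen : u.2 + 1 ≤ lam u.1 := he.2.2
    refine ⟨⟨hu1, hu2, hu3⟩, ?_, ?_⟩
    · -- not a corner content
      rintro ⟨v, hvcorner, hvc⟩
      have hvu : v = u := by
        refine end_unique lam hlam ?_ ⟨hu1, hu2, hu3⟩ hvc (corner_se lam hvcorner) hse
        rcases hvcorner with ⟨h1, _⟩ | ⟨h1, _⟩ <;> exact h1
      rcases hvcorner with ⟨_, _, hsv, _⟩ | ⟨_, hev, _⟩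
      · exact hs (hvu ▸ hsv)
      · exact hev (hvu ▸ he)
    · -- for every outer corner below, an inner corner in between
      rintro w ⟨⟨hw1, hw2, hw3⟩, hwe, hws⟩ hcw
      have hwa : lam w.1 = w.2 := by
        have : ¬ (1 ≤ w.1 ∧ 1 ≤ w.2 + 1 ∧ w.2 + 1 ≤ lam w.1) := hwe
        omega
      have hwb : lam (w.1 + 1) < w.2 := by
        have : ¬ (1 ≤ w.1 + 1 ∧ 1 ≤ w.2 ∧ w.2 ≤ lam (w.1 + 1)) := hws
        omega
      simp only [content] at hcw
      -- first: u.1 < w.1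
      have hia : u.1 < w.1 := by
        by_contra hcon
        push_neg at hcon
        have : lam u.1 ≤ lam w.1 := lam_anti lam hlam hcon
        omega
      have hb : w.2 ≤ lam (u.1 + 1) :=
        hwa ▸ lam_anti lam hlam (by omega : u.1 + 1 ≤ w.1)
      -- the inner corner (u.1, lam (u.1+1))
      have hmono : lam (u.1 + 1) ≤ lam u.1 := lam_anti lam hlam (Nat.le_succ u.1)
      have hc1 : (u.1, lam (u.1 + 1)) ∈ cells lam :=
        ⟨hu1, show 1 ≤ lam (u.1 + 1) by omega, show lam (u.1 + 1) ≤ lam u.1 from hmono⟩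
      have hc2 : eC (u.1, lam (u.1 + 1)) ∈ cells lam :=
        ⟨hu1, show 1 ≤ lam (u.1 + 1) + 1 by omega,
          show lam (u.1 + 1) + 1 ≤ lam u.1 by omega⟩
      have hc3 : sC (u.1, lam (u.1 + 1)) ∈ cells lam :=
        ⟨show 1 ≤ u.1 + 1 by omega, show 1 ≤ lam (u.1 + 1) by omega, le_refl _⟩
      have hc4 : seC (u.1, lam (u.1 + 1)) ∉ cells lam := by
        intro hc
        have hcc : lam (u.1 + 1) + 1 ≤ lam (u.1 + 1) := hc.2.2
        omega
      refine ⟨(u.1, lam (u.1 + 1)), ⟨hc1, hc2, hc3, hc4⟩, ?_, ?_⟩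
      · show (w.2 : ℤ) - w.1 < (lam (u.1 + 1) : ℤ) - u.1
        omega
      · show (lam (u.1 + 1) : ℤ) - u.1 < (u.2 : ℤ) - u.1
        omega
  · right
    exact ⟨hu, u, ⟨hu, he, hs⟩, rfl⟩

lemma tail_in_OB (lam : ℕ → ℕ) (hlam : IsPartition lam) (u : Cell)
    (hu : u ∈ cells lam) (he : eC u ∉ cells lam) (hse : seC u ∉ cells lam) :
    u ∈ regionO lam ∪ regionB lam := by
  classical
  by_cases hs : sC u ∈ cells lam
  · right
    obtain ⟨hu1, hu2, hu3⟩ := hu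
    have hen : lam u.1 < u.2 + 1 := by
      have : ¬ (1 ≤ u.1 ∧ 1 ≤ u.2 + 1 ∧ u.2 + 1 ≤ lam u.1) := he
      omega
    have heq : lam u.1 = u.2 := by omega
    have hsn : u.2 ≤ lam (u.1 + 1) := hs.2.2
    have hsen : lam (u.1 + 1) < u.2 + 1 := by
      have : ¬ (1 ≤ u.1 + 1 ∧ 1 ≤ u.2 + 1 ∧ u.2 + 1 ≤ lam (u.1 + 1)) := hse
      omega
    have heq2 : lam (u.1 + 1) = u.2 := by omega
    -- u is the end of its diagonal
    have hendu : ∀ v : Cell, v ∈ cells lam → content v = content u →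
        seC v ∉ cells lam → v = u :=
      fun v hv hc hsv => end_unique lam hlam hv ⟨hu1, hu2, hu3⟩ hc hsv hse
    constructor
    · exact ⟨hu1, hu2, hu3⟩
    intro hmem
    -- not in I, O, A
    rcases hmem with (⟨_, v, hvI, hvc⟩ | ⟨_, v, hvO, hvc⟩) | hA
    · have hvu : v = u := hendu v hvI.1 hvc (corner_se lam (Or.inl hvI))
      exact he (hvu ▸ hvI.2.1)
    · have hvu : v = u := hendu v hvO.1 hvc (corner_se lam (Or.inr hvO))
      subst hvu
      exact hvO.2.2 hs
    · obtain ⟨_, _, hA⟩ := hA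
      -- construct the outer corner below u with no inner corner in between
      obtain ⟨N, hN⟩ := hlam.2
      have hex : ∃ r, u.1 ≤ r ∧ lam (r + 1) < u.2 := by
        refine ⟨max u.1 N, le_max_left _ _, ?_⟩
        rw [hN (max u.1 N + 1) (by omega)]
        omega
      obtain ⟨a, ha1, ha2, hmin⟩ : ∃ a, u.1 ≤ a ∧ lam (a + 1) < u.2 ∧
          ∀ r, u.1 ≤ r → r < a → u.2 ≤ lam (r + 1) := by
        refine ⟨Nat.find hex, (Nat.find_spec hex).1, (Nat.find_spec hex).2, ?_⟩
        intro r hr1 hr2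
        have h := Nat.find_min hex hr2
        push_neg at h
        exact h hr1
      have hai : u.1 < a := by
        rcases Nat.lt_or_ge u.1 a with h | h
        · exact h
        · exfalso
          have heqa : a = u.1 := by omega
          rw [heqa] at ha2
          omega
      have hla : lam a = u.2 := by
        have h1 : lam a ≤ lam u.1 := lam_anti lam hlam (by omega)
        have h2 : u.2 ≤ lam a := by
          have := hmin (a - 1) (by omega) (by omega)
          have heq3 : a - 1 + 1 = a := by omega
          rwa [heq3] at this
        omega
      -- the outer corner (a, u.2)
      obtain ⟨v, ⟨⟨hv1, hv2, hv3⟩, hve, hvs, hvse⟩, hcv1, hcv2⟩ :=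
        hA (a, u.2) ⟨⟨by omega, by simpa, by simp; omega⟩,
          fun hc => by have : u.2 + 1 ≤ lam a := hc.2.2; omega,
          fun hc => by have : u.2 ≤ lam (a + 1) := hc.2.2; omega⟩
          (by simp only [content]; omega)
      -- v = (r, s) inner corner with u.2 - a < s - r < u.2 - u.1 : contradiction
      have hvE : v.2 + 1 ≤ lam v.1 := hve.2.2
      have hvS : v.2 ≤ lam (v.1 + 1) := hvs.2.2
      have hvSE : lam (v.1 + 1) < v.2 + 1 := by
        have : ¬ (1 ≤ v.1 + 1 ∧ 1 ≤ v.2 + 1 ∧ v.2 + 1 ≤ lam (v.1 + 1)) := hvse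
        omega
      have hvs2 : v.2 = lam (v.1 + 1) := by omega
      simp only [content] at hcv1 hcv2
      rcases Nat.lt_or_ge v.1 u.1 with hcase | hcase
      · -- v.1 < u.1 : content too big
        have : lam u.1 ≤ lam (v.1 + 1) := lam_anti lam hlam (by omega)
        omega
      rcases Nat.lt_or_ge v.1 a with hcase2 | hcase2
      · -- u.1 ≤ v.1 < a : no drop there
        have h1 : u.2 ≤ lam (v.1 + 1) := hmin v.1 hcase hcase2
        have h2 : lam v.1 ≤ lam u.1 := lam_anti lam hlam hcase
        omega
      · -- a ≤ v.1 : content too small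
        have : lam (v.1 + 1) ≤ lam (a + 1) := lam_anti lam hlam (by omega)
        omega
  · left
    exact ⟨hu, u, ⟨hu, he, hs⟩, rfl⟩

/-- The head of a rim-hook lies in `A ∪ O` and its tail lies in `O ∪ B`. -/
theorem rimHook_head_tail_regions (lam : ℕ → ℕ) (hlam : IsPartition lam)
    (h : List Cell) (hh : IsRimHook lam h) :
    hd h ∈ regionA lam ∪ regionO lam ∧ lst h ∈ regionO lam ∪ regionB lam := by
  obtain ⟨⟨hne, hmem, _⟩, hshd, helst, hse⟩ := hh
  have hhd_mem : hd h ∈ h := by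
    cases h with
    | nil => exact absurd rfl hne
    | cons a t => simp [hd]
  have hlst_mem : lst h ∈ h := lst_mem h hne
  constructor
  · exact head_in_AO lam hlam (hd h) (hmem _ hhd_mem) hshd (hse _ hhd_mem)
  · exact tail_in_OB lam hlam (lst h) (hmem _ hlst_mem) helst (hse _ hlst_mem)
end

section
/- If h is a rim-hook of a partition λ and u ∈ h is a cell with u ∈ I ∪ A, then the East neighbour e u also belongs to h; if u ∈ h with u ∈ B ∪ I, then the South neighbour s u also belongs to h. -/
/-!
A rim-hook runs along the rim of `λ`, the cells whose south-east neighbour lies outside `λ`,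
and there every step is forced: a cell whose east neighbour is in `λ` must be followed by it
(a North step would lead to a cell with that neighbour as its south-east neighbour), and a cell
whose south neighbour is in `λ` must be preceded by it. So it suffices to place the east or
south neighbour of a rim cell inside `λ`. A rim cell of `I` is the inner corner of its
diagonal. A rim cell of `A` without east neighbour sits inside a vertical run of the rim, and
the outer corner at the bottom of that run has no inner corner between it and the cell. A rim
cell of `B` without south neighbour sits inside a horizontal run, and the inner corner at the
left end of that run puts the cell into `A`.
-/

theorem List.IsChain.exists_rel_right {α : Type*} {R : α → α → Prop} {l : List α}
    (hl : l.IsChain R) {a d : α} (ha : a ∈ l) (hne : a ≠ l.getLastD d) :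
    ∃ b ∈ l, R a b := by
  obtain ⟨s, t, rfl⟩ := List.append_of_mem ha
  cases t with
  | nil => simp at hne
  | cons b t => exact ⟨b, by simp, (List.isChain_append_cons_cons.mp hl).2.1⟩

theorem List.IsChain.exists_rel_left {α : Type*} {R : α → α → Prop} {l : List α}
    (hl : l.IsChain R) {a d : α} (ha : a ∈ l) (hne : a ≠ l.headD d) :
    ∃ b ∈ l, R b a := by
  obtain ⟨s, t, rfl⟩ := List.append_of_mem ha
  rcases List.eq_nil_or_concat s with rfl | ⟨s, b, rfl⟩
  · simp at hne
  · refine ⟨b, by simp, ?_⟩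
    simp only [List.concat_eq_append, List.append_assoc, List.singleton_append] at hl
    exact (List.isChain_append_cons_cons.mp hl).2.1

theorem IsPartition.antitone {lam : ℕ → ℕ} (hlam : IsPartition lam) : Antitone lam :=
  antitone_nat_of_succ_le hlam.1

theorem IsPartition.exists_isOuterCorner_below {lam : ℕ → ℕ} (hlam : IsPartition lam)
    {i : ℕ} (hi : 1 ≤ i) (hrow : 1 ≤ lam i) : ∃ i' ≥ i, IsOuterCorner lam (i', lam i) := by
  have hend : ∃ k, lam (i + k + 1) < lam i := by
    obtain ⟨N, hN⟩ := hlam.2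
    exact ⟨N, by rw [hN _ (by omega)]; omega⟩
  obtain ⟨k, hk, hmin⟩ : ∃ k, lam (i + k + 1) < lam i ∧ ∀ m < k, lam i ≤ lam (i + m + 1) :=
    ⟨Nat.find hend, Nat.find_spec hend, fun m hm => not_lt.mp (Nat.find_min hend hm)⟩
  have hlast : lam (i + k) = lam i := by
    rcases k with _ | m
    · rfl
    · rw [← add_assoc]
      have := hmin m (by omega)
      have := hlam.antitone (show i ≤ i + m + 1 by omega)
      omega
  refine ⟨i + k, by omega, ⟨?_, ?_, ?_⟩⟩ <;> simp only [cells, eC, sC, Set.mem_ofPred_eq] <;> omega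

def IsRimCell (lam : ℕ → ℕ) (u : Cell) : Prop :=
  u ∈ cells lam ∧ seC u ∉ cells lam

section CellArithmetic

variable {lam : ℕ → ℕ} {i j : ℕ}

theorem isRimCell_mk_iff :
    IsRimCell lam (i, j) ↔ 1 ≤ i ∧ 1 ≤ j ∧ lam (i + 1) ≤ j ∧ j ≤ lam i := by
  simp only [IsRimCell, cells, seC, Set.mem_ofPred_eq]
  omega

theorem isInnerCorner_mk_iff :
    IsInnerCorner lam (i, j) ↔ 1 ≤ i ∧ 1 ≤ j ∧ lam (i + 1) = j ∧ j < lam i := by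
  simp only [IsInnerCorner, cells, eC, sC, seC, Set.mem_ofPred_eq]
  omega

theorem isOuterCorner_mk_iff :
    IsOuterCorner lam (i, j) ↔ 1 ≤ i ∧ 1 ≤ j ∧ lam i = j ∧ lam (i + 1) < j := by
  simp only [IsOuterCorner, cells, eC, sC, Set.mem_ofPred_eq]
  omega

end CellArithmetic

namespace IsRimCell

variable {lam : ℕ → ℕ} (hlam : IsPartition lam) {u : Cell}
include hlam

theorem eq_of_content_eq {v : Cell} (hu : IsRimCell lam u) (hv : IsRimCell lam v)
    (hc : content u = content v) : u = v := by
  obtain ⟨i, j⟩ := u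
  obtain ⟨p, q⟩ := v
  rw [isRimCell_mk_iff] at hu hv
  simp only [content] at hc
  rcases lt_trichotomy i p with hip | rfl | hpi
  · have := hlam.antitone (show i + 1 ≤ p by omega)
    omega
  · simp only [Prod.mk.injEq, true_and]
    omega
  · have := hlam.antitone (show p + 1 ≤ i by omega)
    omega

theorem isInnerCorner_of_mem_regionI (hu : IsRimCell lam u) (hI : u ∈ regionI lam) :
    IsInnerCorner lam u := by
  obtain ⟨-, v, hv, hvu⟩ := hI
  have hvrim : IsRimCell lam v := ⟨hv.1, hv.2.2.2⟩
  rwa [eq_of_content_eq hlam hu hvrim hvu.symm]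

theorem eC_mem_cells_of_mem_regionA (hu : IsRimCell lam u) (hA : u ∈ regionA lam) :
    eC u ∈ cells lam := by
  obtain ⟨i, j⟩ := u
  obtain ⟨-, hnc, hbelow⟩ := hA
  obtain ⟨hi, hj, hlow, hhigh⟩ := isRimCell_mk_iff.mp hu
  by_contra he
  have hrow : lam i = j := by
    simp only [cells, eC, Set.mem_ofPred_eq] at he
    omega
  by_cases hvert : lam (i + 1) = j
  · obtain ⟨i', hii', hw⟩ := hlam.exists_isOuterCorner_below (i := i + 1) (by omega) (by omega)
    rw [hvert] at hw
    obtain ⟨-, -, hi'j, hi'end⟩ := isOuterCorner_mk_iff.mp hw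
    obtain ⟨⟨p, q⟩, hv, hwv, hvu⟩ := hbelow _ hw (by simp only [content]; omega)
    obtain ⟨-, -, hqp, hqlt⟩ := isInnerCorner_mk_iff.mp hv
    simp only [content] at hwv hvu
    -- the inner corner `(p, q)` lies strictly inside the vertical run of rows `i, …, i'`
    have hip : i < p := by
      by_contra
      have := hlam.antitone (show p + 1 ≤ i + 1 by omega)
      omega
    have hpi' : p < i' := by
      by_contra
      have := hlam.antitone (show i' + 1 ≤ p + 1 by omega)
      omega
    have := hlam.antitone (show i + 1 ≤ p by omega)
    have := hlam.antitone (show p + 1 ≤ i' by omega)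
    omega
  · exact hnc ⟨(i, j), Or.inr (isOuterCorner_mk_iff.mpr ⟨hi, hj, hrow, by omega⟩), rfl⟩

theorem sC_mem_cells_of_mem_regionB (hu : IsRimCell lam u) (hB : u ∈ regionB lam) :
    sC u ∈ cells lam := by
  obtain ⟨i, j⟩ := u
  obtain ⟨hcell, hnot⟩ := hB
  simp only [Set.mem_union, not_or] at hnot
  obtain ⟨⟨hnI, hnO⟩, hnA⟩ := hnot
  obtain ⟨hi, hj, hlow, hhigh⟩ := isRimCell_mk_iff.mp hu
  by_contra hs
  have hrow : lam (i + 1) < j := by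
    simp only [cells, sC, Set.mem_ofPred_eq] at hs
    omega
  by_cases hend : lam i = j
  · exact hnO ⟨hcell, (i, j), isOuterCorner_mk_iff.mpr ⟨hi, hj, hend, hrow⟩, rfl⟩
  refine hnA ⟨hcell, ?_, ?_⟩
  · rintro ⟨v, hv | hv, hvu⟩
    · exact hnI ⟨hcell, v, hv, hvu⟩
    · exact hnO ⟨hcell, v, hv, hvu⟩
  · rintro ⟨p, q⟩ hw hwu
    obtain ⟨-, hq, hqp, hpend⟩ := isOuterCorner_mk_iff.mp hw
    simp only [content] at hwu
    have hip : i < p := by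
      by_contra
      have := hlam.antitone (show p ≤ i by omega)
      omega
    have := hlam.antitone (show i + 1 ≤ p by omega)
    refine ⟨(i, lam (i + 1)), isInnerCorner_mk_iff.mpr ⟨hi, by omega, rfl, by omega⟩, ?_, ?_⟩ <;>
      simp only [content] <;> omega

end IsRimCell

namespace IsRimHook

variable {lam : ℕ → ℕ} {h : List Cell} (hh : IsRimHook lam h) {u : Cell}
include hh

theorem isRimCell_of_mem (hu : u ∈ h) : IsRimCell lam u :=
  ⟨hh.1.2.1 u hu, hh.2.2.2 u hu⟩

theorem eC_mem_of_eC_mem_cells (hu : u ∈ h) (he : eC u ∈ cells lam) : eC u ∈ h := by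
  have hne : u ≠ lst h := by
    rintro rfl
    exact hh.2.2.1 he
  obtain ⟨v, hv, hnorth | rfl⟩ := hh.1.2.2.exists_rel_right hu hne
  · have hi : 1 ≤ u.1 := (hh.1.2.1 u hu).1
    have hse : seC v = eC u := by
      simp only [hnorth, seC, nC, eC, Nat.sub_add_cancel hi]
    exact absurd (hse ▸ he) (hh.2.2.2 v hv)
  · exact hv

theorem sC_mem_of_sC_mem_cells (hu : u ∈ h) (hs : sC u ∈ cells lam) : sC u ∈ h := by
  have hne : u ≠ hd h := by
    rintro rfl
    exact hh.2.1 hs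
  obtain ⟨w, hw, rfl | rfl⟩ := hh.1.2.2.exists_rel_left hu hne
  · have hi : 1 ≤ w.1 := (hh.1.2.1 w hw).1
    simpa only [sC, nC, Nat.sub_add_cancel hi] using hw
  · exact absurd hs (hh.2.2.2 w hw)

end IsRimHook

/-- If `u` is a cell of a rim-hook `h` with `u ∈ I ∪ A` then `e u ∈ h`;
if `u ∈ B ∪ I` then `s u ∈ h`. -/
theorem rimHook_region_steps (lam : ℕ → ℕ) (hlam : IsPartition lam)
    (h : List Cell) (hh : IsRimHook lam h) (u : Cell) (hu : u ∈ h) :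
    (u ∈ regionI lam ∪ regionA lam → eC u ∈ h) ∧
    (u ∈ regionB lam ∪ regionI lam → sC u ∈ h) := by
  have hrim := hh.isRimCell_of_mem hu
  constructor
  · rintro (hI | hA)
    · exact hh.eC_mem_of_eC_mem_cells hu (hrim.isInnerCorner_of_mem_regionI hlam hI).2.1
    · exact hh.eC_mem_of_eC_mem_cells hu (hrim.eC_mem_cells_of_mem_regionA hlam hA)
  · rintro (hB | hI)
    · exact hh.sC_mem_of_sC_mem_cells hu (hrim.sC_mem_cells_of_mem_regionB hlam hB)
    · exact hh.sC_mem_of_sC_mem_cells hu (hrim.isInnerCorner_of_mem_regionI hlam hI).2.2.1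
end

section
/- If a rim-hook h corresponding to cell (i,j) of λ inserts into a reverse plane partition π, then for every k ∈ ℤ the k-th trace satisfies tr_k(h * π) = tr_k(π) + 1 if j - λ'_j ≤ k ≤ λ_i - i, and tr_k(h * π) = tr_k(π) otherwise. In particular |h * π| = |π| + h(i,j). -/
/-!
Each north-east step raises the content by one, so the cells of a north-east path have distinct
contents filling an interval, from the content of its head to that of its last cell. An insertion
path `P` for `h` ends where `h` ends and has the same length, so it covers exactly the contents
`j - λ'_j, …, λ_i - i` of `h`, once each: adding one along `P` raises exactly these traces by one,
and the size by the number `h(i,j)` of cells of `P`.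
-/

lemma content_of_northEast_step {a b : Cell} (hb : 1 ≤ b.1) (hab : b = nC a ∨ b = eC a) :
    content b = content a + 1 := by
  rcases hab with rfl | rfl <;> simp only [nC, eC, content] at * <;> omega

theorem List.IsChain.map_eq_map_range {α : Type*} {f : α → ℤ} {a : α} {l : List α}
    (hl : (a :: l).IsChain (fun x y => f y = f x + 1)) :
    (a :: l).map f = (List.range (l.length + 1)).map (fun i : ℕ => f a + i) := by
  induction l generalizing a with
  | nil => simp
  | cons b l ih =>
    obtain ⟨hab, hl⟩ := List.isChain_cons_cons.mp hl
    rw [List.map_cons, ih hl, List.length_cons, List.range_succ_eq_map (n := l.length + 1),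
      List.map_cons, List.map_map]
    congr 1
    · simp
    · refine List.map_congr_left fun i _ => ?_
      simp only [Function.comp_apply, hab]
      push_cast
      ring

lemma count_map_range_add (c k : ℤ) (n : ℕ) :
    ((List.range n).map (fun i : ℕ => c + i)).count k = if c ≤ k ∧ k < c + n then 1 else 0 := by
  have hnodup : ((List.range n).map (fun i : ℕ => c + i)).Nodup :=
    List.nodup_range.map fun i j hij => by simpa using hij
  have hmem : k ∈ (List.range n).map (fun i : ℕ => c + i) ↔ c ≤ k ∧ k < c + n := by
    simp only [List.mem_map, List.mem_range]
    exact ⟨by omega, fun hk => ⟨(k - c).toNat, by omega, by omega⟩⟩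
  split_ifs with hk
  · exact List.count_eq_one_of_mem hnodup (hmem.mpr hk)
  · exact List.count_eq_zero_of_not_mem (mt hmem.mp hk)

namespace IsNEPath

variable {lam : ℕ → ℕ} {P : List Cell}

lemma isChain_content_s16 (hP : IsNEPath lam P) :
    P.IsChain (fun x y => content y = content x + 1) :=
  hP.2.2.imp_of_mem_imp fun _ b _ hb hab => content_of_northEast_step (hP.2.1 b hb).1 hab

lemma map_content (hP : IsNEPath lam P) :
    P.map content = (List.range (len P + 1)).map (fun i : ℕ => content (hd P) + i) := by
  obtain ⟨a, l, rfl⟩ := List.exists_cons_of_ne_nil hP.1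
  simpa [len, hd] using hP.isChain_content_s16.map_eq_map_range

lemma nodup (hP : IsNEPath lam P) : P.Nodup := by
  refine List.Nodup.of_map content ?_
  rw [hP.map_content]
  exact List.nodup_range.map fun i j hij => by simpa using hij

lemma content_lst (hP : IsNEPath lam P) : content (lst P) = content (hd P) + len P := by
  have h := congrArg List.getLast? hP.map_content
  rw [List.getLast?_map, List.getLast?_map, List.getLast?_range, if_neg (Nat.succ_ne_zero _),
    List.getLast?_eq_some_getLast hP.1] at h
  simpa [lst, List.getLastD_eq_getLast?, List.getLast?_eq_some_getLast hP.1] using h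

lemma ncard_setOf_content_eq (hP : IsNEPath lam P) (k : ℤ) :
    {v | v ∈ P ∧ content v = k}.ncard =
      if content (hd P) ≤ k ∧ k ≤ content (lst P) then 1 else 0 := by
  classical
  have hset : {v | v ∈ P ∧ content v = k} = ↑(P.filter (content · = k)).toFinset := by
    ext v; simp
  rw [hset, Set.ncard_coe_finset, List.toFinset_card_of_nodup (hP.nodup.filter _),
    ← List.countP_eq_length_filter]
  have hcount : P.countP (content · = k) = (P.map content).count k := by
    simp only [List.count, List.countP_map, Function.comp_def]
    exact List.countP_congr fun x _ => by simp
  rw [hcount, hP.map_content, count_map_range_add, hP.content_lst]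
  congr 1
  simp only [eq_iff_iff]
  omega

lemma ncard_setOf_mem (hP : IsNEPath lam P) : {v | v ∈ P}.ncard = len P + 1 := by
  classical
  rw [← List.coe_toFinset, Set.ncard_coe_finset, List.toFinset_card_of_nodup hP.nodup]
  have := List.length_pos_iff.mpr hP.1
  simp only [len]
  omega

end IsNEPath

lemma IsPartition.finite_cells {lam : ℕ → ℕ} (hlam : IsPartition lam) : (cells lam).Finite := by
  obtain ⟨N, hN⟩ := hlam.2
  have hanti := antitone_nat_of_succ_le hlam.1
  refine ((Set.finite_Iio N).prod (Set.finite_Iic (lam 0))).subset ?_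
  rintro ⟨i, j⟩ ⟨-, hj, hji⟩
  refine ⟨?_, hji.trans (hanti (Nat.zero_le i))⟩
  by_contra hiN
  have := hN i (not_lt.mp hiN)
  simp_all

lemma finsum_mem_addPath {S : Set Cell} (hS : S.Finite) (π : Cell → ℕ) (P : List Cell) :
    ∑ᶠ v ∈ S, addPath π P v = ∑ᶠ v ∈ S, π v + (S ∩ {v | v ∈ P}).ncard := by
  have hsplit : ∀ v, addPath π P v = π v + {v | v ∈ P}.indicator 1 v := by
    intro v
    by_cases hv : v ∈ P <;> simp [addPath, hv]
  simp_rw [hsplit]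
  rw [finsum_mem_add_distrib hS, ← finsum_one]
  congr 1
  rw [← finsum_mem_inter_support, Set.support_indicator, Function.support_one, Set.inter_univ]
  exact finsum_mem_congr rfl fun v hv => Set.indicator_of_mem hv.2 _

lemma InsertPath.content_hd {lam : ℕ → ℕ} {π : Cell → ℕ} {h P : List Cell}
    (hh : IsNEPath lam h) (hP : InsertPath lam π h P) : content (hd P) = content (hd h) := by
  have hPc := hP.1.content_lst
  have hhc := hh.content_lst
  rw [hP.2.2.1, hP.2.2.2.1] at hPc
  linarith

theorem trace_insert_general (lam : ℕ → ℕ) (hlam : IsPartition lam)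
    (π : Cell → ℕ) (u : Cell)
    (h : List Cell) (hh : IsRimHook lam h)
    (hhd : hd h = (conj lam u.2, u.2)) (hlst : lst h = (u.1, lam u.1))
    (P : List Cell) (hP : InsertPath lam π h P) :
    (∀ k : ℤ, ∑ᶠ v ∈ {v ∈ cells lam | content v = k}, addPath π P v =
      (∑ᶠ v ∈ {v ∈ cells lam | content v = k}, π v) +
        (if (u.2 : ℤ) - (conj lam u.2 : ℤ) ≤ k ∧ k ≤ (lam u.1 : ℤ) - (u.1 : ℤ)
          then 1 else 0)) ∧
    (∑ᶠ v ∈ cells lam, addPath π P v) = (∑ᶠ v ∈ cells lam, π v) + hookLen lam u := by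
  have hPath := hP.1
  have hcontent_hd : content (hd P) = u.2 - conj lam u.2 := by
    rw [hP.content_hd hh.1, hhd]; rfl
  have hcontent_lst : content (lst P) = lam u.1 - u.1 := by
    rw [hP.2.2.1, hlst]; rfl
  refine ⟨fun k => ?_, ?_⟩
  · have hdiag : {v ∈ cells lam | content v = k} ∩ {v | v ∈ P} = {v | v ∈ P ∧ content v = k} :=
      Set.ext fun v => ⟨fun hv => ⟨hv.2, hv.1.2⟩, fun hv => ⟨⟨hPath.2.1 v hv.1, hv.2⟩, hv.1⟩⟩
    rw [finsum_mem_addPath (hlam.finite_cells.subset (Set.sep_subset _ _)), hdiag,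
      hPath.ncard_setOf_content_eq, hcontent_hd, hcontent_lst]
  · have hsub : {v | v ∈ P} ⊆ cells lam := hPath.2.1
    rw [finsum_mem_addPath hlam.finite_cells, Set.inter_eq_right.mpr hsub, hPath.ncard_setOf_mem]
    have hlen := hPath.content_lst
    rw [hcontent_hd, hcontent_lst] at hlen
    unfold hookLen
    omega

/-- Inserting the rim-hook corresponding to `(i,j)` increases the `k`-th trace by one
exactly for `j - lam'_j ≤ k ≤ lam_i - i`, and increases the size by the hook-length. -/
theorem trace_insert (lam : ℕ → ℕ) (hlam : IsPartition lam)
    (π : Cell → ℕ) (hπ : IsRPP lam π) (u : Cell) (hu : u ∈ cells lam)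
    (h : List Cell) (hh : IsRimHook lam h)
    (hhd : hd h = (conj lam u.2, u.2)) (hlst : lst h = (u.1, lam u.1))
    (P : List Cell) (hP : InsertPath lam π h P) :
    (∀ k : ℤ, ∑ᶠ v ∈ {v ∈ cells lam | content v = k}, addPath π P v =
      (∑ᶠ v ∈ {v ∈ cells lam | content v = k}, π v) +
        (if (u.2 : ℤ) - (conj lam u.2 : ℤ) ≤ k ∧ k ≤ (lam u.1 : ℤ) - (u.1 : ℤ)
          then 1 else 0)) ∧
    (∑ᶠ v ∈ cells lam, addPath π P v) = (∑ᶠ v ∈ cells lam, π v) + hookLen lam u :=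
  trace_insert_general lam hlam π u h hh hhd hlst P hP
end
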